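/- In the monoid of transformations of [0,1) generated by A(x) = x/(x+1), B(x) = 1/(2-x), C(x) = 2x/(x+1), and c(x) = x/(2-x), every element can be written in the form ω₁ω₂ω₃ where ω₁ is a word in {A,B}, ω₂ is a word in blocks of the form CⁿA and cᵐB (n,m ≥ 1), and ω₃ is a word in {C,c}. -/

import Mathlib

/-!
On `[0,1)` the generators satisfy `C A A = A C`, `C A B = B A c`, `C B = B B C`, `c A = A A c`,
`c B B = B c`, `c B A = A B C` and `C c = c C = 1`. Hence a letter `C` or `c` placed in front of
a normal form `ω₁ ω₂ ω₃` can be moved rightwards through `ω₁`, at most two letters at a time,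
until it either forms a new block `CA` or `cB` with a last letter of `ω₁`, or reaches `ω₂`, where
it lengthens, shortens or cancels the first block, or passes into `ω₃`. Left multiplication by `A`
or `B` trivially preserves normal forms, so by induction every element of the monoid has one.
-/

noncomputable def fA : Function.End ℝ := fun x => x / (x + 1)
noncomputable def fB : Function.End ℝ := fun x => 1 / (2 - x)
noncomputable def fC : Function.End ℝ := fun x => 2 * x / (x + 1)
noncomputable def fc : Function.End ℝ := fun x => x / (2 - x)

/-- Evaluation of a word in {A,B} (false = A, true = B) as a composition. -/
noncomputable def evalAB (w : List Bool) : ℝ → ℝ :=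
  w.foldr (fun b g => (if b then fB else fA) ∘ g) id

/-- A block (n, false) is CⁿA and a block (m, true) is cᵐB, with n, m ≥ 1. -/
noncomputable def evalBlock (p : ℕ+ × Bool) : ℝ → ℝ :=
  if p.2 then fc^[(p.1 : ℕ)] ∘ fB else fC^[(p.1 : ℕ)] ∘ fA

noncomputable def evalBlocks (w : List (ℕ+ × Bool)) : ℝ → ℝ :=
  w.foldr (fun p g => evalBlock p ∘ g) id

/-- Evaluation of a word in {C,c} (false = C, true = c). -/
noncomputable def evalCc (w : List Bool) : ℝ → ℝ :=
  w.foldr (fun b g => (if b then fc else fC) ∘ g) id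

open Set Function

local notation "𝕀" => Set.Ico (0 : ℝ) 1

noncomputable def letterAB (b : Bool) : ℝ → ℝ := if b then fB else fA

noncomputable def letterCc (b : Bool) : ℝ → ℝ := if b then fc else fC

lemma evalAB_cons (b : Bool) (w : List Bool) : evalAB (b :: w) = letterAB b ∘ evalAB w := rfl

lemma evalBlock_eq (n : ℕ+) (b : Bool) :
    evalBlock (n, b) = (letterCc b)^[n] ∘ letterAB b := by
  cases b <;> rfl

lemma evalAB_append (u w : List Bool) : evalAB (u ++ w) = evalAB u ∘ evalAB w := by
  induction u with
  | nil => rfl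
  | cons b u ih => rw [List.cons_append, evalAB_cons, evalAB_cons, ih]; rfl

lemma mapsTo_fA : MapsTo fA 𝕀 𝕀 := by
  rintro x ⟨h0, h1⟩
  exact ⟨div_nonneg h0 (by linarith), (div_lt_one (by linarith)).2 (by linarith)⟩

lemma mapsTo_fB : MapsTo fB 𝕀 𝕀 := by
  rintro x ⟨h0, h1⟩
  exact ⟨div_nonneg zero_le_one (by linarith), (div_lt_one (by linarith)).2 (by linarith)⟩

lemma mapsTo_fC : MapsTo fC 𝕀 𝕀 := by
  rintro x ⟨h0, h1⟩
  exact ⟨div_nonneg (by linarith) (by linarith), (div_lt_one (by linarith)).2 (by linarith)⟩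

lemma mapsTo_fc : MapsTo fc 𝕀 𝕀 := by
  rintro x ⟨h0, h1⟩
  exact ⟨div_nonneg h0 (by linarith), (div_lt_one (by linarith)).2 (by linarith)⟩

lemma mapsTo_letterAB (b : Bool) : MapsTo (letterAB b) 𝕀 𝕀 := by
  cases b
  exacts [mapsTo_fA, mapsTo_fB]

lemma mapsTo_letterCc (b : Bool) : MapsTo (letterCc b) 𝕀 𝕀 := by
  cases b
  exacts [mapsTo_fC, mapsTo_fc]

lemma mapsTo_evalAB (w : List Bool) : MapsTo (evalAB w) 𝕀 𝕀 := by
  induction w with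
  | nil => exact mapsTo_id _
  | cons b w ih => exact (mapsTo_letterAB b).comp ih

lemma mapsTo_evalCc (w : List Bool) : MapsTo (evalCc w) 𝕀 𝕀 := by
  induction w with
  | nil => exact mapsTo_id _
  | cons b w ih => exact (mapsTo_letterCc b).comp ih

lemma mapsTo_evalBlock (p : ℕ+ × Bool) : MapsTo (evalBlock p) 𝕀 𝕀 := by
  rw [evalBlock_eq]
  exact ((mapsTo_letterCc p.2).iterate _).comp (mapsTo_letterAB p.2)

lemma mapsTo_evalBlocks (w : List (ℕ+ × Bool)) : MapsTo (evalBlocks w) 𝕀 𝕀 := by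
  induction w with
  | nil => exact mapsTo_id _
  | cons p w ih => exact (mapsTo_evalBlock p).comp ih

section Relations

/- The generators are Möbius maps, acting linearly on the homogeneous coordinates `(a : b)` of
`a / b`; rewriting `x` as `x / 1` turns each relation below into such a linear computation. -/

lemma fA_div {a b : ℝ} (hb : b ≠ 0) (hab : a + b ≠ 0) : fA (a / b) = a / (a + b) := by
  simp only [fA]; field_simp

lemma fB_div {a b : ℝ} (hb : b ≠ 0) : fB (a / b) = b / (2 * b - a) := by
  simp only [fB]; field_simp

lemma fC_div {a b : ℝ} (hb : b ≠ 0) (hab : a + b ≠ 0) : fC (a / b) = 2 * a / (a + b) := by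
  simp only [fC]; field_simp

lemma fc_div {a b : ℝ} (hb : b ≠ 0) : fc (a / b) = a / (2 * b - a) := by
  simp only [fc]; field_simp

variable {x : ℝ}

lemma fC_fc (hx : x ∈ 𝕀) : fC (fc x) = x := by
  obtain ⟨h0, h1⟩ := hx
  rw [← div_one x, fc_div, fC_div] <;> first | ring1 | (apply ne_of_gt; linarith)

lemma fc_fC (hx : x ∈ 𝕀) : fc (fC x) = x := by
  obtain ⟨h0, h1⟩ := hx
  rw [← div_one x, fC_div, fc_div] <;> first | ring1 | (apply ne_of_gt; linarith)

lemma fC_fA_fA (hx : x ∈ 𝕀) : fC (fA (fA x)) = fA (fC x) := by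
  obtain ⟨h0, h1⟩ := hx
  rw [← div_one x, fA_div, fA_div, fC_div, fC_div, fA_div] <;>
    first | ring1 | (apply ne_of_gt; linarith)

lemma fC_fA_fB (hx : x ∈ 𝕀) : fC (fA (fB x)) = fB (fA (fc x)) := by
  obtain ⟨h0, h1⟩ := hx
  rw [← div_one x, fB_div, fA_div, fC_div, fc_div, fA_div, fB_div] <;>
    first | ring1 | (apply ne_of_gt; linarith)

lemma fC_fB (hx : x ∈ 𝕀) : fC (fB x) = fB (fB (fC x)) := by
  obtain ⟨h0, h1⟩ := hx
  rw [← div_one x, fB_div, fC_div, fC_div, fB_div, fB_div] <;>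
    first | ring1 | (apply ne_of_gt; linarith)

lemma fc_fA (hx : x ∈ 𝕀) : fc (fA x) = fA (fA (fc x)) := by
  obtain ⟨h0, h1⟩ := hx
  rw [← div_one x, fA_div, fc_div, fc_div, fA_div, fA_div] <;>
    first | ring1 | (apply ne_of_gt; linarith)

lemma fc_fB_fB (hx : x ∈ 𝕀) : fc (fB (fB x)) = fB (fc x) := by
  obtain ⟨h0, h1⟩ := hx
  rw [← div_one x, fB_div, fB_div, fc_div, fc_div, fB_div] <;>
    first | ring1 | (apply ne_of_gt; linarith)

lemma fc_fB_fA (hx : x ∈ 𝕀) : fc (fB (fA x)) = fA (fB (fC x)) := by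
  obtain ⟨h0, h1⟩ := hx
  rw [← div_one x, fA_div, fB_div, fc_div, fC_div, fB_div, fA_div] <;>
    first | ring1 | (apply ne_of_gt; linarith)

lemma letterCc_letterCc_not (b : Bool) (hx : x ∈ 𝕀) : letterCc b (letterCc (!b) x) = x := by
  cases b
  exacts [fC_fc hx, fc_fC hx]

end Relations

section NormalForm

noncomputable def normalForm (w₁ : List Bool) (w₂ : List (ℕ+ × Bool)) (w₃ : List Bool) :
    ℝ → ℝ :=
  evalAB w₁ ∘ evalBlocks w₂ ∘ evalCc w₃

def HasNormalForm (g : ℝ → ℝ) : Prop :=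
  ∃ w₁ w₂ w₃, EqOn g (normalForm w₁ w₂ w₃) 𝕀

lemma mapsTo_normalForm (w₁ : List Bool) (w₂ : List (ℕ+ × Bool)) (w₃ : List Bool) :
    MapsTo (normalForm w₁ w₂ w₃) 𝕀 𝕀 :=
  (mapsTo_evalAB w₁).comp ((mapsTo_evalBlocks w₂).comp (mapsTo_evalCc w₃))

variable {f g g' : ℝ → ℝ}

lemma HasNormalForm.congr (h : HasNormalForm g') (hg : EqOn g g' 𝕀) : HasNormalForm g := by
  obtain ⟨w₁, w₂, w₃, h⟩ := h
  exact ⟨w₁, w₂, w₃, hg.trans h⟩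

lemma HasNormalForm.comp (hg : HasNormalForm g)
    (hf : ∀ w₁ w₂ w₃, HasNormalForm (f ∘ normalForm w₁ w₂ w₃)) : HasNormalForm (f ∘ g) := by
  obtain ⟨w₁, w₂, w₃, h⟩ := hg
  exact (hf w₁ w₂ w₃).congr h.comp_left

lemma HasNormalForm.evalAB_comp (u : List Bool) (hg : HasNormalForm g) :
    HasNormalForm (evalAB u ∘ g) :=
  hg.comp fun w₁ w₂ w₃ => ⟨u ++ w₁, w₂, w₃, fun _ _ => by simp [normalForm, evalAB_append]⟩

lemma hasNormalForm_letterCc_comp_normalForm_nil (s : Bool) (w₂ : List (ℕ+ × Bool))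
    (w₃ : List Bool) : HasNormalForm (letterCc s ∘ normalForm [] w₂ w₃) := by
  obtain _ | ⟨⟨n, b⟩, t⟩ := w₂
  · exact ⟨[], [], s :: w₃, fun _ _ => rfl⟩
  obtain rfl | rfl : b = s ∨ b = !s := by cases b <;> cases s <;> simp
  · refine ⟨[], (n + 1, b) :: t, w₃, fun x _ => ?_⟩
    simp only [normalForm, evalBlocks, List.foldr_cons, evalBlock_eq, comp_apply,
      PNat.add_coe, PNat.one_coe, iterate_succ_apply']
    rfl
  · induction n using PNat.recOn with
    | one =>
      refine ⟨[!s], t, w₃, fun x hx => ?_⟩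
      simp only [normalForm, evalBlocks, List.foldr_cons, evalBlock_eq, comp_apply,
        PNat.one_coe, iterate_one]
      exact letterCc_letterCc_not s (mapsTo_letterAB _ (mapsTo_normalForm [] t w₃ hx))
    | succ m _ =>
      refine ⟨[], (m, !s) :: t, w₃, fun x hx => ?_⟩
      simp only [normalForm, evalBlocks, List.foldr_cons, evalBlock_eq, comp_apply,
        PNat.add_coe, PNat.one_coe, iterate_succ_apply']
      exact letterCc_letterCc_not s (((mapsTo_letterCc _).iterate _)
        (mapsTo_letterAB _ (mapsTo_normalForm [] t w₃ hx)))

theorem hasNormalForm_letterCc_comp_normalForm :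
    ∀ (s : Bool) (w₁ : List Bool) (w₂ : List (ℕ+ × Bool)) (w₃ : List Bool),
      HasNormalForm (letterCc s ∘ normalForm w₁ w₂ w₃)
  | s, [], w₂, w₃ => hasNormalForm_letterCc_comp_normalForm_nil s w₂ w₃
  | false, [false], w₂, w₃ => ⟨[], (1, false) :: w₂, w₃, fun _ _ => rfl⟩
  | true, [true], w₂, w₃ => ⟨[], (1, true) :: w₂, w₃, fun _ _ => rfl⟩
  | false, false :: false :: t, w₂, w₃ =>
    ((hasNormalForm_letterCc_comp_normalForm false t w₂ w₃).evalAB_comp [false]).congr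
      fun _ hx => fC_fA_fA (mapsTo_normalForm t w₂ w₃ hx)
  | false, false :: true :: t, w₂, w₃ =>
    ((hasNormalForm_letterCc_comp_normalForm true t w₂ w₃).evalAB_comp [true, false]).congr
      fun _ hx => fC_fA_fB (mapsTo_normalForm t w₂ w₃ hx)
  | false, true :: t, w₂, w₃ =>
    ((hasNormalForm_letterCc_comp_normalForm false t w₂ w₃).evalAB_comp [true, true]).congr
      fun _ hx => fC_fB (mapsTo_normalForm t w₂ w₃ hx)
  | true, false :: t, w₂, w₃ =>
    ((hasNormalForm_letterCc_comp_normalForm true t w₂ w₃).evalAB_comp [false, false]).congr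
      fun _ hx => fc_fA (mapsTo_normalForm t w₂ w₃ hx)
  | true, true :: true :: t, w₂, w₃ =>
    ((hasNormalForm_letterCc_comp_normalForm true t w₂ w₃).evalAB_comp [true]).congr
      fun _ hx => fc_fB_fB (mapsTo_normalForm t w₂ w₃ hx)
  | true, true :: false :: t, w₂, w₃ =>
    ((hasNormalForm_letterCc_comp_normalForm false t w₂ w₃).evalAB_comp [false, true]).congr
      fun _ hx => fc_fB_fA (mapsTo_normalForm t w₂ w₃ hx)

lemma HasNormalForm.letterAB_comp (b : Bool) (hg : HasNormalForm g) :
    HasNormalForm (letterAB b ∘ g) :=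
  (hg.evalAB_comp [b]).congr fun _ _ => rfl

lemma HasNormalForm.letterCc_comp (b : Bool) (hg : HasNormalForm g) :
    HasNormalForm (letterCc b ∘ g) :=
  hg.comp (hasNormalForm_letterCc_comp_normalForm b)

lemma HasNormalForm.comp_of_mem_closure {f : Function.End ℝ}
    (hf : f ∈ Submonoid.closure ({fA, fB, fC, fc} : Set (Function.End ℝ)))
    (hg : HasNormalForm g) : HasNormalForm (f ∘ g) := by
  induction hf using Submonoid.closure_induction generalizing g with
  | one => exact hg
  | mul _ _ _ _ ih₁ ih₂ => exact ih₁ (ih₂ hg)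
  | mem _ hf =>
    rcases hf with rfl | rfl | rfl | rfl
    exacts [hg.letterAB_comp false, hg.letterAB_comp true, hg.letterCc_comp false,
      hg.letterCc_comp true]

end NormalForm

/-- Every element of the monoid of transformations of [0,1) generated by A, B, C, c
    can be written as ω₁ω₂ω₃ with ω₁ a word in {A,B}, ω₂ a word in blocks CⁿA, cᵐB
    (n, m ≥ 1), and ω₃ a word in {C,c}. -/
theorem stmt15 :
    ∀ f ∈ Submonoid.closure ({fA, fB, fC, fc} : Set (Function.End ℝ)),
      ∃ (w₁ : List Bool) (w₂ : List (ℕ+ × Bool)) (w₃ : List Bool),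
        ∀ x ∈ Set.Ico (0 : ℝ) 1, f x = evalAB w₁ (evalBlocks w₂ (evalCc w₃ x)) := fun _ hf =>
  HasNormalForm.comp_of_mem_closure hf (g := id) ⟨[], [], [], fun _ _ => rfl⟩
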